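/- Let X be a random variable with H(X) = ∞, let g be measurable, Y = g(X), and suppose the relative information loss satisfies l(X→Y) > 0. Then the absolute information loss is infinite: L(X→Y) = H(X|Y) = ∞. -/

import Mathlib

open MeasureTheory ProbabilityTheory Filter Set
open scoped ENNReal NNReal Topology

noncomputable section

/-- Base-2 entropy of the discrete (atomic) part of a measure. -/
def pmfEntropy {β : Type*} [MeasurableSpace β] (ν : Measure β) : ℝ≥0∞ :=
  ∑' b : β, ENNReal.ofReal (-((ν {b}).toReal * Real.logb 2 (ν {b}).toReal))

/-- Conditional entropy `H(X | Y)` (of a discretely supported `X`) given `Y`,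
computed through the regular conditional distribution of `X` given `Y`. -/
def condEnt {α β γ : Type*} [MeasurableSpace α] [MeasurableSpace β] [StandardBorelSpace β]
    [Nonempty β] [MeasurableSpace γ] (μ : Measure α) [IsFiniteMeasure μ]
    (X : α → β) (Y : α → γ) : ℝ≥0∞ :=
  ∫⁻ y, pmfEntropy (condDistrib X Y μ y) ∂(μ.map Y)

/-- Componentwise uniform quantization `X̂ₙ = ⌊2ⁿ X⌋ / 2ⁿ`. -/
def quant {ι : Type*} (n : ℕ) (x : ι → ℝ) : ι → ℝ :=
  fun i => (⌊(2 : ℝ) ^ n * x i⌋ : ℝ) / (2 : ℝ) ^ n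

/-- `H(X̂ₙ)`, entropy of the quantized input. -/
def entQ {α ι : Type*} [MeasurableSpace α] [Fintype ι] (μ : Measure α)
    (X : α → ι → ℝ) (n : ℕ) : ℝ≥0∞ :=
  pmfEntropy (μ.map fun a => quant n (X a))

/-- `H(X̂ₙ | Y)`. -/
def condEntQ {α ι γ : Type*} [MeasurableSpace α] [Fintype ι] [MeasurableSpace γ]
    (μ : Measure α) [IsFiniteMeasure μ] (X : α → ι → ℝ) (Y : α → γ) (n : ℕ) : ℝ≥0∞ :=
  condEnt μ (fun a => quant n (X a)) Y

/-- Information loss `L(X→Y) = H(X|Y) = limₙ H(X̂ₙ|Y)`; since the sequence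
`H(X̂ₙ|Y)` is nondecreasing in `n` the limit equals the supremum. -/
def infoLoss {α ι γ : Type*} [MeasurableSpace α] [Fintype ι] [MeasurableSpace γ]
    (μ : Measure α) [IsFiniteMeasure μ] (X : α → ι → ℝ) (Y : α → γ) : ℝ≥0∞ :=
  ⨆ n : ℕ, condEntQ μ X Y n

/-- The sequence `H(X̂ₙ|Y)/H(X̂ₙ)` whose limit is the relative information loss. -/
def relLossSeq {α ι γ : Type*} [MeasurableSpace α] [Fintype ι] [MeasurableSpace γ]
    (μ : Measure α) [IsFiniteMeasure μ] (X : α → ι → ℝ) (Y : α → γ) (n : ℕ) : ℝ :=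
  (condEntQ μ X Y n).toReal / (entQ μ X n).toReal

/-- The sequence `I(X̂ₙ;Y)/H(X̂ₙ) = (H(X̂ₙ) - H(X̂ₙ|Y))/H(X̂ₙ)` whose limit is the
relative information transfer. -/
def relTransSeq {α ι γ : Type*} [MeasurableSpace α] [Fintype ι] [MeasurableSpace γ]
    (μ : Measure α) [IsFiniteMeasure μ] (X : α → ι → ℝ) (Y : α → γ) (n : ℕ) : ℝ :=
  ((entQ μ X n).toReal - (condEntQ μ X Y n).toReal) / (entQ μ X n).toReal

/-- `H(ν̂ₙ)` for a measure on `ℝᴺ` (quantized entropy of a distribution). -/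
def entQM {ι : Type*} [Fintype ι] (ν : Measure (ι → ℝ)) (n : ℕ) : ℝ≥0∞ :=
  pmfEntropy (ν.map (quant n))

/-!
If `L(X→Y) = supₙ H(X̂ₙ|Y)` were finite, then `H(X̂ₙ|Y) / H(X̂ₙ) → l > 0` would bound
`H(X̂ₙ)` by `2 L(X→Y) / l` for all large `n`. Refining the quantization only splits atoms
of the distribution of `X̂ₙ`, and splitting a mass `q ≤ 1` into pieces `qᵢ ≤ q` cannot
decrease entropy since `-log qᵢ ≥ -log q`; so `n ↦ H(X̂ₙ)` is nondecreasing, the eventual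
bound is a global one, and this contradicts `H(X) = supₙ H(X̂ₙ) = ∞`.
-/

def entropyTerm (t : ℝ≥0∞) : ℝ≥0∞ :=
  ENNReal.ofReal (-(t.toReal * Real.logb 2 t.toReal))

lemma pmfEntropy_eq_tsum_entropyTerm {β : Type*} [MeasurableSpace β] (ν : Measure β) :
    pmfEntropy ν = ∑' b, entropyTerm (ν {b}) := rfl

lemma entropyTerm_tsum_le {Ω : Type*} (g : Ω → ℝ≥0∞) (hg : ∑' ω, g ω ≤ 1) :
    entropyTerm (∑' ω, g ω) ≤ ∑' ω, entropyTerm (g ω) := by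
  set q := ∑' ω, g ω
  have hq : q ≠ ⊤ := ne_top_of_le_ne_top ENNReal.one_ne_top hg
  set c := -Real.logb 2 q.toReal
  have hc : 0 ≤ c := neg_nonneg.2 <| Real.logb_nonpos one_lt_two ENNReal.toReal_nonneg <| by
    simpa using ENNReal.toReal_mono ENNReal.one_ne_top hg
  -- Each piece `gᵢ ≤ q` satisfies `-log gᵢ ≥ -log q = c`.
  have hpiece : ∀ ω, g ω * ENNReal.ofReal c ≤ entropyTerm (g ω) := fun ω => by
    have hgq : g ω ≤ q := ENNReal.le_tsum ω
    have hω : g ω ≠ ⊤ := ne_top_of_le_ne_top hq hgq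
    rcases (ENNReal.toReal_nonneg (a := g ω)).eq_or_lt with h0 | hpos
    · simp [(ENNReal.toReal_eq_zero_iff _).1 h0.symm |>.resolve_right hω, entropyTerm]
    rw [← ENNReal.ofReal_toReal hω, ← ENNReal.ofReal_mul ENNReal.toReal_nonneg, entropyTerm,
      ENNReal.toReal_ofReal ENNReal.toReal_nonneg, ← mul_neg]
    exact ENNReal.ofReal_le_ofReal <| mul_le_mul_of_nonneg_left
      (neg_le_neg <| Real.logb_le_logb_of_le one_lt_two hpos (ENNReal.toReal_mono hq hgq))
      hpos.le
  calc entropyTerm q = q * ENNReal.ofReal c := by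
        rw [entropyTerm, ← mul_neg, ENNReal.ofReal_mul ENNReal.toReal_nonneg,
          ENNReal.ofReal_toReal hq]
    _ = ∑' ω, g ω * ENNReal.ofReal c := ENNReal.tsum_mul_right.symm
    _ ≤ ∑' ω, entropyTerm (g ω) := ENNReal.tsum_le_tsum hpiece

lemma measure_eq_tsum_singleton_of_ae_mem {β : Type*} [MeasurableSpace β]
    [MeasurableSingletonClass β] {ν : Measure β} {S : Set β} (hS : S.Countable)
    (hνS : ∀ᵐ x ∂ν, x ∈ S) (t : Set β) : ν t = ∑' a : t, ν {(a : β)} := by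
  have hnull : ∀ a ∈ Sᶜ, ν {a} = 0 := fun a ha =>
    measure_mono_null (singleton_subset_iff.2 ha) (ae_iff.1 hνS)
  have hcount : (t \ Sᶜ).Countable := hS.mono fun x hx => not_not.1 hx.2
  calc ν t = ν (t \ Sᶜ) := (measure_sdiff_null (ae_iff.1 hνS)).symm
    _ = ∑' a : ↥(t \ Sᶜ), ν {(a : β)} := by
        simpa using (tsum_measure_preimage_singleton hcount (f := id) (μ := ν)
          fun _ _ => measurableSet_singleton _).symm
    _ = ∑' a : t, ν {(a : β)} := (tsum_setElem_eq_tsum_setElem_sdiff t Sᶜ hnull).symm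

lemma pmfEntropy_map_le {β δ : Type*} [MeasurableSpace β] [MeasurableSingletonClass β]
    [MeasurableSpace δ] [MeasurableSingletonClass δ] (ν : Measure β)
    [IsZeroOrProbabilityMeasure ν] {f : β → δ} (hf : Measurable f) {S : Set β}
    (hS : S.Countable) (hνS : ∀ᵐ x ∂ν, x ∈ S) :
    pmfEntropy (ν.map f) ≤ pmfEntropy ν := by
  have hfiber : ∀ b, ν (f ⁻¹' {b}) = ∑' a : f ⁻¹' {b}, ν {(a : β)} := fun b =>
    measure_eq_tsum_singleton_of_ae_mem hS hνS _
  calc pmfEntropy (ν.map f) = ∑' b, entropyTerm (∑' a : f ⁻¹' {b}, ν {(a : β)}) := by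
        simp only [pmfEntropy_eq_tsum_entropyTerm, Measure.map_apply hf (measurableSet_singleton _),
          hfiber]
    _ ≤ ∑' b, ∑' a : f ⁻¹' {b}, entropyTerm (ν {(a : β)}) :=
        ENNReal.tsum_le_tsum fun b => entropyTerm_tsum_le _ ((hfiber b).symm ▸ prob_le_one)
    _ = pmfEntropy ν := ENNReal.tsum_fiberwise (fun a => entropyTerm (ν {a})) f

lemma Int.floor_intCast_floor_div_natCast {k : Type*} [Field k] [LinearOrder k] [IsOrderedRing k]
    [FloorRing k] (a : k) (n : ℕ) : ⌊(⌊a⌋ : k) / n⌋ = ⌊a / n⌋ := by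
  rw [Int.floor_div_natCast, Int.floor_div_natCast, Int.floor_intCast]

lemma quant_quant {ι : Type*} {m n : ℕ} (hmn : m ≤ n) (x : ι → ℝ) :
    quant m (quant n x) = quant m x := by
  funext i
  have hpow : (2 : ℝ) ^ n = 2 ^ m * ((2 ^ (n - m) : ℕ) : ℝ) := by
    rw [Nat.cast_pow, Nat.cast_ofNat, ← pow_add, Nat.add_sub_cancel' hmn]
  have hscale : (2 : ℝ) ^ m * ((⌊2 ^ n * x i⌋ : ℝ) / 2 ^ n)
      = (⌊2 ^ n * x i⌋ : ℝ) / ((2 ^ (n - m) : ℕ) : ℝ) := by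
    rw [hpow]; field_simp
  simp only [quant]
  rw [hscale, Int.floor_intCast_floor_div_natCast, hpow]
  congr 3
  field_simp

lemma measurable_quant {ι : Type*} (n : ℕ) : Measurable (quant (ι := ι) n) :=
  measurable_pi_lambda _ fun i => (measurable_from_top.comp
    ((measurable_const.mul (measurable_pi_apply i)).floor)).div_const _

lemma countable_range_quant {ι : Type*} [Finite ι] (n : ℕ) :
    (range (quant (ι := ι) n)).Countable :=
  (Set.countable_pi fun _ => countable_range fun k : ℤ => (k : ℝ) / 2 ^ n).mono <| by
    rintro _ ⟨x, rfl⟩ i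
    exact ⟨⌊2 ^ n * x i⌋, rfl⟩

lemma entQ_monotone {α ι : Type*} [MeasurableSpace α] [Fintype ι] (μ : Measure α)
    [IsZeroOrProbabilityMeasure μ] {X : α → ι → ℝ} (hX : Measurable X) :
    Monotone (entQ μ X) := by
  intro m n hmn
  have hXn : Measurable fun a => quant n (X a) := (measurable_quant n).comp hX
  have hmap : μ.map (fun a => quant m (X a)) = (μ.map fun a => quant n (X a)).map (quant m) := by
    rw [Measure.map_map (measurable_quant m) hXn]
    simp only [Function.comp_def, quant_quant hmn]
  have hrange : ∀ᵐ x ∂(μ.map fun a => quant n (X a)), x ∈ range (quant n) := by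
    have hsub : range (fun a => quant n (X a)) ⊆ range (quant n) :=
      range_comp_subset_range X (quant n)
    exact (ae_map_mem_range _ ((countable_range_quant n).mono hsub).measurableSet μ).mono
      fun x hx => hsub hx
  unfold entQ
  rw [hmap]
  exact pmfEntropy_map_le _ (measurable_quant m) (countable_range_quant n) hrange

lemma ENNReal.lt_ofReal_div_of_lt_toReal_div {a b : ℝ≥0∞} {c : ℝ} (hc : 0 < c)
    (h : c < a.toReal / b.toReal) : b < ENNReal.ofReal (a.toReal / c) := by
  have hb : 0 < b.toReal := by
    by_contra! hb
    rw [le_antisymm hb toReal_nonneg, _root_.div_zero] at h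
    exact h.not_gt hc
  have hba : b.toReal < a.toReal / c := by
    rw [lt_div_iff₀ hc, mul_comm]
    exact (lt_div_iff₀ hb).1 h
  calc b = ENNReal.ofReal b.toReal := (ofReal_toReal (toReal_pos_iff.1 hb).2.ne).symm
    _ < ENNReal.ofReal (a.toReal / c) := (ofReal_lt_ofReal_iff (hb.trans hba)).2 hba

theorem infoLoss_eq_top_of_relLoss_pos_general
    {α ι γ : Type*} [MeasurableSpace α] [Fintype ι] [MeasurableSpace γ]
    (μ : Measure α) [IsProbabilityMeasure μ]
    (X : α → ι → ℝ) (g : (ι → ℝ) → γ)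
    (hX : Measurable X)
    (hHX : (⨆ n : ℕ, entQ μ X n) = ⊤)
    (l : ℝ) (hlpos : 0 < l)
    (hl : Tendsto (fun n : ℕ => relLossSeq μ X (fun a => g (X a)) n) atTop (𝓝 l)) :
    infoLoss μ X (fun a => g (X a)) = ⊤ := by
  by_contra hL
  obtain ⟨N, hN⟩ := eventually_atTop.1 (hl.eventually (lt_mem_nhds (half_lt_self hlpos)))
  have hbound : ∀ n, entQ μ X (n + N)
      ≤ ENNReal.ofReal ((infoLoss μ X fun a => g (X a)).toReal / (l / 2)) := fun n =>
    (ENNReal.lt_ofReal_div_of_lt_toReal_div (half_pos hlpos) (hN _ (Nat.le_add_left N n))).le.trans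
      (ENNReal.ofReal_le_ofReal (div_le_div_of_nonneg_right
        (ENNReal.toReal_mono hL (le_iSup (condEntQ μ X _) _)) (half_pos hlpos).le))
  have hsup := iSup_le hbound
  rw [(entQ_monotone μ hX).iSup_nat_add N, hHX, top_le_iff] at hsup
  exact ENNReal.ofReal_ne_top hsup

/-- **Positive relative loss implies infinite absolute loss.**  If `H(X) = ∞`
(in the sense that `H(X̂ₙ) → ∞`, i.e. `supₙ H(X̂ₙ) = ∞`) and the relative
information loss `l(X→Y)` exists and is positive, then `L(X→Y) = H(X|Y) = ∞`. -/
theorem infoLoss_eq_top_of_relLoss_pos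
    {α ι γ : Type*} [MeasurableSpace α] [Fintype ι] [MeasurableSpace γ]
    (μ : Measure α) [IsProbabilityMeasure μ]
    (X : α → ι → ℝ) (g : (ι → ℝ) → γ)
    (hX : Measurable X) (hg : Measurable g)
    (hHX : (⨆ n : ℕ, entQ μ X n) = ⊤)
    (l : ℝ) (hlpos : 0 < l)
    (hl : Tendsto (fun n : ℕ => relLossSeq μ X (fun a => g (X a)) n) atTop (𝓝 l)) :
    infoLoss μ X (fun a => g (X a)) = ⊤ :=
  infoLoss_eq_top_of_relLoss_pos_general μ X g hX hHX l hlpos hl
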